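/- Suppose Λ₁ and Λ₂ are integral lattices and φ : (C(Λ₁), ρ₁) → (C(Λ₂), −ρ₂) is an isomorphism of torsors with ℚ/2ℤ-valued maps. Then the glue lattice Λ₁ ⊕_φ Λ₂, formed using the group isomorphism Λ̄₁ → Λ̄₂ underlying φ, is an integral, unimodular lattice that contains Λ₁ and Λ₂ as complementary, primitive sublattices. -/

import Mathlib

set_option linter.unusedSectionVars false

open Matrix BigOperators

namespace Greene

/-- A rational number is an integer. -/
def isInt (q : ℚ) : Prop := ∃ m : ℤ, q = (m : ℚ)

section LatticeDefs

variable {ι : Type} [Fintype ι] [DecidableEq ι]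
variable {ι' : Type} [Fintype ι'] [DecidableEq ι']

/-- The bilinear form on `ι → ℚ` with (integral) Gram matrix `B`. -/
def qform (B : Matrix ι ι ℤ) (x y : ι → ℚ) : ℚ :=
  x ⬝ᵥ ((B.map (Int.cast : ℤ → ℚ)) *ᵥ y)

/-- The set of integer vectors: the standard lattice inside `ι → ℚ`. -/
def intVecs (ι : Type) [Fintype ι] [DecidableEq ι] : Set (ι → ℚ) :=
  {x | ∀ i, isInt (x i)}

lemma qform_zero_left (B : Matrix ι ι ℤ) (y : ι → ℚ) : qform B 0 y = 0 :=
  zero_dotProduct _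

lemma qform_add_left (B : Matrix ι ι ℤ) (x x' y : ι → ℚ) :
    qform B (x + x') y = qform B x y + qform B x' y := add_dotProduct _ _ _

lemma qform_neg_left (B : Matrix ι ι ℤ) (x y : ι → ℚ) :
    qform B (-x) y = -qform B x y := neg_dotProduct _ _

/-- The dual lattice `S* = {x ∈ span_ℚ S | ⟨x,y⟩ ∈ ℤ for all y ∈ S}`. -/
def dualOf (B : Matrix ι ι ℤ) (S : Set (ι → ℚ)) : AddSubgroup (ι → ℚ) where
  carrier := {x | x ∈ Submodule.span ℚ S ∧ ∀ y ∈ S, isInt (qform B x y)}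
  zero_mem' := ⟨Submodule.zero_mem _, fun y _ => ⟨0, by simp [qform_zero_left]⟩⟩
  add_mem' := by
    intro a b ha hb
    refine ⟨Submodule.add_mem _ ha.1 hb.1, fun y hy => ?_⟩
    obtain ⟨m, hm⟩ := ha.2 y hy
    obtain ⟨m', hm'⟩ := hb.2 y hy
    exact ⟨m + m', by rw [qform_add_left, hm, hm']; push_cast; ring⟩
  neg_mem' := by
    intro a ha
    refine ⟨Submodule.neg_mem _ ha.1, fun y hy => ?_⟩
    obtain ⟨m, hm⟩ := ha.2 y hy
    exact ⟨-m, by rw [qform_neg_left, hm]; push_cast; ring⟩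

/-- Characteristic covectors: `χ ∈ S*` with `⟨χ,y⟩ ≡ ⟨y,y⟩ (mod 2)` for all `y ∈ S`. -/
def CharOf (B : Matrix ι ι ℤ) (S : Set (ι → ℚ)) : Set (ι → ℚ) :=
  {χ | χ ∈ dualOf B S ∧ ∀ y ∈ S, ∃ m : ℤ, qform B χ y - qform B y y = 2 * (m : ℚ)}

/-- Two covectors are in the same class mod `2S`. -/
def SameClass (S : Set (ι → ℚ)) (χ χ' : ι → ℚ) : Prop :=
  ∃ y ∈ S, χ' = χ + (2 : ℚ) • y

/-- Short characteristic covectors: minimal norm in their class mod `2S`. -/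
def ShortOf (B : Matrix ι ι ℤ) (S : Set (ι → ℚ)) : Set (ι → ℚ) :=
  {χ | χ ∈ CharOf B S ∧ ∀ χ' ∈ CharOf B S, SameClass S χ χ' → qform B χ χ ≤ qform B χ' χ'}

/-- Rank of a lattice: dimension of its rational span. -/
noncomputable def rkOf (S : Set (ι → ℚ)) : ℕ := Module.finrank ℚ (Submodule.span ℚ S)

/-- The lattice `S` sitting inside its dual. -/
def latIn (B : Matrix ι ι ℤ) (S : Set (ι → ℚ)) : AddSubgroup (dualOf B S) :=
  AddSubgroup.closure {x | (x : ι → ℚ) ∈ S}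

/-- The discriminant group `S*/S`. -/
def disc (B : Matrix ι ι ℤ) (S : Set (ι → ℚ)) : Type :=
  dualOf B S ⧸ latIn B S

noncomputable instance (B : Matrix ι ι ℤ) (S : Set (ι → ℚ)) : AddCommGroup (disc B S) :=
  inferInstanceAs (AddCommGroup (dualOf B S ⧸ latIn B S))

/-- The class of a dual vector in the discriminant group. -/
def dmk (B : Matrix ι ι ℤ) (S : Set (ι → ℚ)) {x : ι → ℚ} (hx : x ∈ dualOf B S) :
    disc B S := QuotientAddGroup.mk (⟨x, hx⟩ : dualOf B S)

/-- `S` is an additive subgroup (a sublattice, when contained in a lattice). -/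
def IsLat (S : Set (ι → ℚ)) : Prop :=
  (0 : ι → ℚ) ∈ S ∧ ∀ x ∈ S, ∀ y ∈ S, x - y ∈ S

/-- The form is integer valued on `S`. -/
def IntegralOn (B : Matrix ι ι ℤ) (S : Set (ι → ℚ)) : Prop :=
  ∀ x ∈ S, ∀ y ∈ S, isInt (qform B x y)

/-- Unimodularity: the dual lattice equals the lattice. -/
def UnimodularOn (B : Matrix ι ι ℤ) (S : Set (ι → ℚ)) : Prop :=
  ((dualOf B S : AddSubgroup (ι → ℚ)) : Set (ι → ℚ)) = S

/-- Positive definiteness of the form on the span of `S`. -/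
def PosDefOn (B : Matrix ι ι ℤ) (S : Set (ι → ℚ)) : Prop :=
  ∀ x ∈ Submodule.span ℚ S, x ≠ 0 → 0 < qform B x x

/-- Orthogonality of two sublattices. -/
def OrthogonalSets (B : Matrix ι ι ℤ) (S T : Set (ι → ℚ)) : Prop :=
  ∀ x ∈ S, ∀ y ∈ T, qform B x y = 0

/-- `S, T` are complementary sublattices of `L`: orthogonal with ranks summing to `rk L`. -/
noncomputable def ComplementaryIn (B : Matrix ι ι ℤ) (L S T : Set (ι → ℚ)) : Prop :=
  OrthogonalSets B S T ∧ rkOf S + rkOf T = rkOf L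

/-- `S ⊆ L` is a primitive sublattice: the restriction map `L* → S*` surjects. -/
def PrimitiveIn (B : Matrix ι ι ℤ) (L S : Set (ι → ℚ)) : Prop :=
  ∀ x ∈ dualOf B S, ∃ z ∈ dualOf B L, ∀ u ∈ S, qform B z u = qform B x u

/-- `s` is the signature of the form restricted to the span of `S` (Sylvester form). -/
def IsSignatureOf (B : Matrix ι ι ℤ) (S : Set (ι → ℚ)) (s : ℤ) : Prop :=
  ∃ (p q : ℕ) (v : Fin (p + q) → (ι → ℚ)),
    (∀ i, v i ∈ Submodule.span ℚ S) ∧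
    Submodule.span ℚ (Set.range v) = Submodule.span ℚ S ∧
    LinearIndependent ℚ v ∧
    (∀ i j, i ≠ j → qform B (v i) (v j) = 0) ∧
    (∀ i : Fin (p + q),
      if (i : ℕ) < p then 0 < qform B (v i) (v i) else qform B (v i) (v i) < 0) ∧
    s = (p : ℤ) - (q : ℤ)

/-- `S` admits an orthonormal basis of `n` elements, i.e. `S ≅ ℤⁿ`. -/
def HasOrthonormalBasis (B : Matrix ι ι ℤ) (S : Set (ι → ℚ)) (n : ℕ) : Prop :=
  ∃ v : Fin n → (ι → ℚ), (∀ i, v i ∈ S) ∧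
    (∀ i j, qform B (v i) (v j) = if i = j then 1 else 0) ∧
    (∀ x ∈ S, ∃ c : Fin n → ℤ, x = ∑ i, (c i : ℚ) • v i)

/-- Isomorphism of lattices: an additive bijection preserving the forms. -/
def LatIso (B : Matrix ι ι ℤ) (S : Set (ι → ℚ)) (B' : Matrix ι' ι' ℤ) (S' : Set (ι' → ℚ)) :
    Prop :=
  ∃ f : (ι → ℚ) → (ι' → ℚ), Set.BijOn f S S' ∧
    (∀ x ∈ S, ∀ y ∈ S, f (x + y) = f x + f y) ∧
    (∀ x ∈ S, ∀ y ∈ S, qform B' (f x) (f y) = qform B x y)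

/-- An isomorphism of the torsors `C(S₁) → C(S₂)` (given on representatives by `Φ`),
covering the group isomorphism `ψ` of discriminant groups. -/
def TorsorMapIso (B₁ : Matrix ι ι ℤ) (S₁ : Set (ι → ℚ))
    (B₂ : Matrix ι' ι' ℤ) (S₂ : Set (ι' → ℚ))
    (Φ : (ι → ℚ) → (ι' → ℚ)) (ψ : disc B₁ S₁ ≃+ disc B₂ S₂) : Prop :=
  (∀ χ ∈ CharOf B₁ S₁, Φ χ ∈ CharOf B₂ S₂) ∧
  (∀ χ ∈ CharOf B₁ S₁, ∀ χ' ∈ CharOf B₁ S₁,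
    (SameClass S₁ χ χ' ↔ SameClass S₂ (Φ χ) (Φ χ'))) ∧
  (∀ μ ∈ CharOf B₂ S₂, ∃ χ ∈ CharOf B₁ S₁, SameClass S₂ (Φ χ) μ) ∧
  (∀ χ ∈ CharOf B₁ S₁, ∀ χ' ∈ CharOf B₁ S₁,
    ∀ (x : ι → ℚ) (y : ι' → ℚ) (hx : x ∈ dualOf B₁ S₁) (hy : y ∈ dualOf B₂ S₂),
      χ' = χ + (2 : ℚ) • x → Φ χ' = Φ χ + (2 : ℚ) • y →
      ψ (dmk B₁ S₁ hx) = dmk B₂ S₂ hy)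

/-- Compatibility of `Φ` with the `d`-invariants: `d₂([Φ χ]) = ε · d₁([χ])`,
where `d` is the minimum of `(|χ'|² - rk)/4` over the class. -/
noncomputable def DCompat (B₁ : Matrix ι ι ℤ) (S₁ : Set (ι → ℚ))
    (B₂ : Matrix ι' ι' ℤ) (S₂ : Set (ι' → ℚ))
    (ε : ℚ) (Φ : (ι → ℚ) → (ι' → ℚ)) : Prop :=
  ∀ χ ∈ CharOf B₁ S₁, ∀ q : ℚ,
    IsLeast {t | ∃ χ' ∈ CharOf B₁ S₁, SameClass S₁ χ χ' ∧
      t = (qform B₁ χ' χ' - (rkOf S₁ : ℚ)) / 4} q →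
    IsLeast {t | ∃ μ ∈ CharOf B₂ S₂, SameClass S₂ (Φ χ) μ ∧
      t = (qform B₂ μ μ - (rkOf S₂ : ℚ)) / 4} (ε * q)

/-- Compatibility of `Φ` with the `ρ`-invariants: `ρ₂([Φ χ]) ≡ ε · ρ₁([χ]) (mod 2)`. -/
def RhoCompat (B₁ : Matrix ι ι ℤ) (S₁ : Set (ι → ℚ))
    (B₂ : Matrix ι' ι' ℤ) (S₂ : Set (ι' → ℚ))
    (ε : ℚ) (Φ : (ι → ℚ) → (ι' → ℚ)) : Prop :=
  ∀ χ ∈ CharOf B₁ S₁, ∀ s₁ s₂ : ℤ, IsSignatureOf B₁ S₁ s₁ → IsSignatureOf B₂ S₂ s₂ →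
    ∃ m : ℤ, (qform B₂ (Φ χ) (Φ χ) - (s₂ : ℚ)) / 4 - ε * ((qform B₁ χ χ - (s₁ : ℚ)) / 4)
      = 2 * (m : ℚ)

/-- The `d`-invariants `(C(S₁), d₁)` and `(C(S₂), ε·d₂)` are isomorphic. -/
noncomputable def DIso (B₁ : Matrix ι ι ℤ) (S₁ : Set (ι → ℚ))
    (B₂ : Matrix ι' ι' ℤ) (S₂ : Set (ι' → ℚ)) (ε : ℚ) : Prop :=
  ∃ (Φ : (ι → ℚ) → (ι' → ℚ)) (ψ : disc B₁ S₁ ≃+ disc B₂ S₂),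
    TorsorMapIso B₁ S₁ B₂ S₂ Φ ψ ∧ DCompat B₁ S₁ B₂ S₂ ε Φ

end LatticeDefs

/-- An abstract integral lattice, presented by its Gram matrix. -/
structure IntLattice where
  n : ℕ
  B : Matrix (Fin n) (Fin n) ℤ
  symm : B.IsSymm
  nondeg : B.det ≠ 0

/-- The Gram matrix of the orthogonal direct sum `Λ₁ ⊥ Λ₂`. -/
def glueGram (L₁ L₂ : IntLattice) :
    Matrix (Fin L₁.n ⊕ Fin L₂.n) (Fin L₁.n ⊕ Fin L₂.n) ℤ :=
  Matrix.fromBlocks L₁.B 0 0 L₂.B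

/-- The glue lattice `Λ₁ ⊕_ψ Λ₂ = {x + y ∈ Λ₁* ⊕ Λ₂* : ψ(x̄) = ȳ}`. -/
def glueSet (L₁ L₂ : IntLattice)
    (ψ : disc L₁.B (intVecs (Fin L₁.n)) ≃+ disc L₂.B (intVecs (Fin L₂.n))) :
    Set (Fin L₁.n ⊕ Fin L₂.n → ℚ) :=
  {w | ∃ (h₁ : (w ∘ Sum.inl) ∈ dualOf L₁.B (intVecs (Fin L₁.n)))
        (h₂ : (w ∘ Sum.inr) ∈ dualOf L₂.B (intVecs (Fin L₂.n))),
        ψ (dmk _ _ h₁) = dmk _ _ h₂}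

/-- `Λ₁` embedded in the first factor of `Λ₁* ⊕ Λ₂*`. -/
def inlLat (L₁ L₂ : IntLattice) : Set (Fin L₁.n ⊕ Fin L₂.n → ℚ) :=
  {w | (w ∘ Sum.inl) ∈ intVecs (Fin L₁.n) ∧ w ∘ Sum.inr = 0}

/-- `Λ₂` embedded in the second factor of `Λ₁* ⊕ Λ₂*`. -/
def inrLat (L₁ L₂ : IntLattice) : Set (Fin L₁.n ⊕ Fin L₂.n → ℚ) :=
  {w | (w ∘ Sum.inr) ∈ intVecs (Fin L₂.n) ∧ w ∘ Sum.inl = 0}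

/-- Stabilization `S ⊕ ℤᵏ`. -/
def stabSet {ι : Type} [Fintype ι] [DecidableEq ι] (S : Set (ι → ℚ)) (k : ℕ) :
    Set (ι ⊕ Fin k → ℚ) :=
  {w | (w ∘ Sum.inl) ∈ S ∧ ∀ j, isInt (w (Sum.inr j))}

/-- A finite loopless multigraph, with a reference orientation of each edge. -/
structure MultiGraph where
  nV : ℕ
  nE : ℕ
  hd : Fin nE → Fin nV
  tl : Fin nE → Fin nV
  loopless : ∀ e, hd e ≠ tl e

namespace MultiGraph

/-- The boundary map `C₁(G;ℚ) → C₀(G;ℚ)`, `∂ e = head(e) − tail(e)`. -/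
def bndry (G : MultiGraph) (x : Fin G.nE → ℚ) : Fin G.nV → ℚ :=
  fun v => ∑ e, x e * ((if G.hd e = v then 1 else 0) - (if G.tl e = v then 1 else 0))

/-- The flow lattice `ℱ(G) = ker ∂ ∩ C₁(G;ℤ)`. -/
def flowSet (G : MultiGraph) : Set (Fin G.nE → ℚ) :=
  {x | (∀ e, isInt (x e)) ∧ G.bndry x = 0}

/-- The cut lattice `𝒞(G) = im ∂* ∩ C₁(G;ℤ)`. -/
def cutSet (G : MultiGraph) : Set (Fin G.nE → ℚ) :=
  {x | (∀ e, isInt (x e)) ∧ ∃ g : Fin G.nV → ℚ, ∀ e, x e = g (G.hd e) - g (G.tl e)}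

/-- Reachability using only edges from the set `A`. -/
def ReachIn (G : MultiGraph) (A : Set (Fin G.nE)) : Fin G.nV → Fin G.nV → Prop :=
  Relation.ReflTransGen
    (fun u v => ∃ e ∈ A, (G.hd e = u ∧ G.tl e = v) ∨ (G.hd e = v ∧ G.tl e = u))

def Connected (G : MultiGraph) : Prop := ∀ u v, G.ReachIn Set.univ u v

/-- 2-edge-connectedness: connected, and removing any one edge leaves it connected. -/
def TwoEdgeConnected (G : MultiGraph) : Prop :=
  G.Connected ∧ ∀ e : Fin G.nE, ∀ u v, G.ReachIn {e}ᶜ u v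

/-- `C` is the edge set of a cycle of `G`. -/
def IsCycleEdgeSet (G : MultiGraph) (C : Set (Fin G.nE)) : Prop :=
  ∃ k : ℕ, 0 < k ∧ ∃ (e : Fin k → Fin G.nE) (v : Fin k → Fin G.nV),
    Function.Injective e ∧ Function.Injective v ∧ C = Set.range e ∧
    ∀ i, (G.hd (e i) = v (finRotate k i) ∧ G.tl (e i) = v i) ∨
         (G.tl (e i) = v (finRotate k i) ∧ G.hd (e i) = v i)

/-- A maximal spanning forest: acyclic and realizing all of `G`'s reachability. -/
def IsMaxForest (G : MultiGraph) (F : Finset (Fin G.nE)) : Prop :=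
  (∀ C, G.IsCycleEdgeSet C → ¬(C ⊆ (↑F : Set (Fin G.nE)))) ∧
  ∀ u v, G.ReachIn Set.univ u v → G.ReachIn (↑F) u v

open Classical in
/-- The fundamental cut vector of `e ∈ F`:
`+1` on edges leaving the component `K₁` of the tail of `e` in `F − e`,
`−1` on edges entering it, `0` otherwise. -/
noncomputable def cutVec (G : MultiGraph) (F : Finset (Fin G.nE)) (e : Fin G.nE) :
    Fin G.nE → ℚ := fun j =>
  (if G.ReachIn (↑(F.erase e)) (G.tl j) (G.tl e) then 1 else 0)
    - (if G.ReachIn (↑(F.erase e)) (G.hd j) (G.tl e) then 1 else 0)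

/-- `x` is the fundamental cycle vector of `e ∉ F`: the unique flow supported on
`F ∪ {e}` whose coefficient on `e` is `+1`. -/
def IsFundCycleVec (G : MultiGraph) (F : Finset (Fin G.nE)) (e : Fin G.nE)
    (x : Fin G.nE → ℚ) : Prop :=
  G.bndry x = 0 ∧ (∀ j, j ∉ F → j ≠ e → x j = 0) ∧ x e = 1

/-- Reorienting the edges of `G`: `o e = true` keeps the reference direction. -/
def reorient (G : MultiGraph) (o : Fin G.nE → Bool) : MultiGraph :=
  { G with
    hd := fun e => if o e then G.hd e else G.tl e
    tl := fun e => if o e then G.tl e else G.hd e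
    loopless := by
      intro e
      by_cases h : o e = true
      · simpa [h] using G.loopless e
      · simpa [h] using (G.loopless e).symm }

end MultiGraph

/-- A 2-isomorphism: a bijection of edge sets preserving edge sets of cycles. -/
def TwoIsomorphic (G G' : MultiGraph) : Prop :=
  ∃ σ : Fin G.nE ≃ Fin G'.nE, ∀ C, G.IsCycleEdgeSet C ↔ G'.IsCycleEdgeSet (σ '' C)


/-!
The glue lattice is the graph of `ψ` inside `Λ₁* ⊕ Λ₂*`. Fix a characteristic covector `χ` of `Λ₁`
and put `q(x, y) = (⟨χ, x⟩ + |x|) + (⟨Φ χ, y⟩ + |y|)` on the graph. Up to an even integer, `q(x, y)`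
is the change of `(|χ| + |Φ χ|) / 4` under `χ ↦ χ + 2x`, and this change is even because
`ρ₁ + ρ₂ ∘ Φ` vanishes mod 2. Since `q(w + w') - q(w) - q(w') = 2⟨w, w'⟩`, the form is integral on
the glue lattice. Unimodularity and primitivity follow from `Λ** = Λ` and the surjectivity of `ψ`.
-/

lemma isInt_intCast (m : ℤ) : isInt (m : ℚ) := ⟨m, rfl⟩

lemma isInt_zero : isInt 0 := ⟨0, Int.cast_zero.symm⟩

lemma isInt_add {a b : ℚ} (ha : isInt a) (hb : isInt b) : isInt (a + b) := by
  obtain ⟨m, rfl⟩ := ha; obtain ⟨k, rfl⟩ := hb; exact ⟨m + k, by push_cast; ring⟩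

lemma isInt_neg {a : ℚ} (ha : isInt a) : isInt (-a) := by
  obtain ⟨m, rfl⟩ := ha; exact ⟨-m, by push_cast; ring⟩

lemma isInt_sub {a b : ℚ} (ha : isInt a) (hb : isInt b) : isInt (a - b) := by
  simpa only [sub_eq_add_neg] using isInt_add ha (isInt_neg hb)

lemma isInt_mul {a b : ℚ} (ha : isInt a) (hb : isInt b) : isInt (a * b) := by
  obtain ⟨m, rfl⟩ := ha; obtain ⟨k, rfl⟩ := hb; exact ⟨m * k, by push_cast; ring⟩

lemma isInt_sum {α : Type*} (s : Finset α) {f : α → ℚ} (h : ∀ i ∈ s, isInt (f i)) :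
    isInt (∑ i ∈ s, f i) :=
  Finset.sum_induction f isInt (fun _ _ => isInt_add) isInt_zero h

def isEvenInt (q : ℚ) : Prop := ∃ m : ℤ, q = 2 * (m : ℚ)

lemma isEvenInt_add {a b : ℚ} (ha : isEvenInt a) (hb : isEvenInt b) : isEvenInt (a + b) := by
  obtain ⟨m, rfl⟩ := ha; obtain ⟨k, rfl⟩ := hb; exact ⟨m + k, by push_cast; ring⟩

lemma isEvenInt_sub {a b : ℚ} (ha : isEvenInt a) (hb : isEvenInt b) : isEvenInt (a - b) := by
  obtain ⟨m, rfl⟩ := ha; obtain ⟨k, rfl⟩ := hb; exact ⟨m - k, by push_cast; ring⟩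

lemma isEvenInt_two_mul {a : ℚ} (ha : isInt a) : isEvenInt (2 * a) := by
  obtain ⟨m, rfl⟩ := ha; exact ⟨m, rfl⟩

lemma isInt_of_isEvenInt_two_mul {a : ℚ} (ha : isEvenInt (2 * a)) : isInt a := by
  obtain ⟨m, hm⟩ := ha; exact ⟨m, by linarith⟩

section Form

variable {ι : Type} [Fintype ι] [DecidableEq ι] (B : Matrix ι ι ℤ)

lemma qform_eq_toBilin' (x y : ι → ℚ) : qform B x y = (B.map (Int.cast : ℤ → ℚ)).toBilin' x y :=
  (Matrix.toBilin'_apply' _ x y).symm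

lemma qform_add_right (x y y' : ι → ℚ) : qform B x (y + y') = qform B x y + qform B x y' := by
  simp only [qform_eq_toBilin', map_add]

lemma qform_sub_left (x x' y : ι → ℚ) : qform B (x - x') y = qform B x y - qform B x' y := by
  simp only [qform_eq_toBilin', map_sub, LinearMap.sub_apply]

lemma qform_smul_left (c : ℚ) (x y : ι → ℚ) : qform B (c • x) y = c * qform B x y := by
  simp only [qform_eq_toBilin', map_smul, LinearMap.smul_apply, smul_eq_mul]

lemma qform_smul_right (c : ℚ) (x y : ι → ℚ) : qform B x (c • y) = c * qform B x y := by
  simp only [qform_eq_toBilin', map_smul, smul_eq_mul]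

lemma qform_zero_right (x : ι → ℚ) : qform B x 0 = 0 := by
  simp only [qform_eq_toBilin', map_zero]

variable {B}

lemma qform_comm (hB : B.IsSymm) (x y : ι → ℚ) : qform B x y = qform B y x := by
  rw [qform_eq_toBilin', qform_eq_toBilin', ← LinearMap.BilinForm.IsSymm.eq
    (Matrix.isSymm_toBilin'_iff_isSymm.2 (hB.map _))]

lemma qform_add_add_self (hB : B.IsSymm) (x y : ι → ℚ) :
    qform B (x + y) (x + y) = qform B x x + 2 * qform B x y + qform B y y := by
  rw [qform_add_left, qform_add_right, qform_add_right, qform_comm hB y x]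
  ring

end Form

section IntVecs

variable {ι : Type} [Fintype ι] [DecidableEq ι]

lemma intVecs_zero : (0 : ι → ℚ) ∈ intVecs ι := fun _ => isInt_zero

lemma intVecs_add {x y : ι → ℚ} (hx : x ∈ intVecs ι) (hy : y ∈ intVecs ι) :
    x + y ∈ intVecs ι := fun i => isInt_add (hx i) (hy i)

lemma intVecs_neg {x : ι → ℚ} (hx : x ∈ intVecs ι) : -x ∈ intVecs ι :=
  fun i => isInt_neg (hx i)

lemma single_mem_intVecs (i : ι) : Pi.single i (1 : ℚ) ∈ intVecs ι := by
  intro j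
  rcases eq_or_ne j i with rfl | h
  · exact ⟨1, by simp⟩
  · simpa [Pi.single_eq_of_ne h] using isInt_zero

lemma span_intVecs : Submodule.span ℚ (intVecs ι) = ⊤ :=
  eq_top_iff.2 <| (Pi.basisFun ℚ ι).span_eq.symm.le.trans <|
    Submodule.span_mono <| by rintro _ ⟨i, rfl⟩; simpa using single_mem_intVecs i

lemma rkOf_intVecs : rkOf (intVecs ι) = Fintype.card ι := by
  rw [rkOf, span_intVecs, finrank_top, Module.finrank_fintype_fun_eq_card]

lemma rkOf_image {κ : Type} [Fintype κ] [DecidableEq κ] {f : (ι → ℚ) →ₗ[ℚ] (κ → ℚ)}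
    (hf : Function.Injective f) (S : Set (ι → ℚ)) : rkOf (f '' S) = rkOf S := by
  rw [rkOf, rkOf, Submodule.span_image]
  exact (Submodule.equivMapOfInjective f hf _).finrank_eq.symm

lemma mem_dualOf_intVecs_iff {B : Matrix ι ι ℤ} {x : ι → ℚ} :
    x ∈ dualOf B (intVecs ι) ↔ ∀ y ∈ intVecs ι, isInt (qform B x y) :=
  ⟨fun h => h.2, fun h => ⟨by simp [span_intVecs], h⟩⟩

lemma qform_intCast (B : Matrix ι ι ℤ) (m m' : ι → ℤ) :
    qform B (fun i => (m i : ℚ)) (fun i => (m' i : ℚ)) =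
      ((∑ i, ∑ j, m i * B i j * m' j : ℤ) : ℚ) := by
  simp [qform, dotProduct, mulVec, Finset.mul_sum, mul_assoc]

lemma exists_intCast_eq {x : ι → ℚ} (hx : x ∈ intVecs ι) : ∃ m : ι → ℤ, x = fun i => (m i : ℚ) :=
  ⟨fun i => (hx i).choose, funext fun i => (hx i).choose_spec⟩

lemma mem_dualOf_of_mem_intVecs {B : Matrix ι ι ℤ} {x : ι → ℚ} (hx : x ∈ intVecs ι) :
    x ∈ dualOf B (intVecs ι) := by
  refine mem_dualOf_intVecs_iff.2 fun y hy => ?_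
  obtain ⟨m, rfl⟩ := exists_intCast_eq hx
  obtain ⟨m', rfl⟩ := exists_intCast_eq hy
  rw [qform_intCast]
  exact isInt_intCast _

end IntVecs

section Duality

variable {ι : Type} [Fintype ι] [DecidableEq ι] {B : Matrix ι ι ℤ}

lemma isUnit_det_map_intCast (hd : B.det ≠ 0) : IsUnit (B.map (Int.cast : ℤ → ℚ)).det := by
  rw [show (B.map (Int.cast : ℤ → ℚ)).det = (B.det : ℚ) from
    (RingHom.map_det (Int.castRingHom ℚ) B).symm]
  exact isUnit_iff_ne_zero.2 (by exact_mod_cast hd)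

lemma qform_inv_mulVec (hB : B.IsSymm) (hd : B.det ≠ 0) (v z : ι → ℚ) :
    qform B ((B.map (Int.cast : ℤ → ℚ))⁻¹ *ᵥ v) z = v ⬝ᵥ z := by
  rw [qform, dotProduct_mulVec, ← mulVec_transpose, (hB.map _).eq, mulVec_mulVec,
    mul_nonsing_inv _ (isUnit_det_map_intCast hd), one_mulVec]

lemma inv_mulVec_mem_dualOf (hB : B.IsSymm) (hd : B.det ≠ 0) {v : ι → ℚ} (hv : v ∈ intVecs ι) :
    (B.map (Int.cast : ℤ → ℚ))⁻¹ *ᵥ v ∈ dualOf B (intVecs ι) := by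
  refine mem_dualOf_intVecs_iff.2 fun y hy => ?_
  rw [qform_inv_mulVec hB hd]
  exact isInt_sum _ fun i _ => isInt_mul (hv i) (hy i)

lemma mem_intVecs_of_forall_dualOf (hB : B.IsSymm) (hd : B.det ≠ 0) {x : ι → ℚ}
    (h : ∀ y ∈ dualOf B (intVecs ι), isInt (qform B x y)) : x ∈ intVecs ι := by
  intro i
  have := h _ (inv_mulVec_mem_dualOf hB hd (single_mem_intVecs i))
  rwa [qform_comm hB, qform_inv_mulVec hB hd, single_dotProduct, one_mul] at this

end Duality

section Discriminant

variable {ι : Type} [Fintype ι] [DecidableEq ι] {B : Matrix ι ι ℤ}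

lemma mem_latIn_intVecs_iff {x : dualOf B (intVecs ι)} :
    x ∈ latIn B (intVecs ι) ↔ (x : ι → ℚ) ∈ intVecs ι := by
  let K : AddSubgroup (dualOf B (intVecs ι)) :=
    { carrier := {y | (y : ι → ℚ) ∈ intVecs ι}
      zero_mem' := intVecs_zero
      add_mem' := intVecs_add
      neg_mem' := intVecs_neg }
  change x ∈ AddSubgroup.closure (K : Set (dualOf B (intVecs ι))) ↔ _
  rw [AddSubgroup.closure_eq K]
  rfl

lemma dmk_eq_dmk_iff {x y : ι → ℚ} (hx : x ∈ dualOf B (intVecs ι)) (hy : y ∈ dualOf B (intVecs ι)) :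
    dmk B (intVecs ι) hx = dmk B (intVecs ι) hy ↔ y - x ∈ intVecs ι := by
  refine (QuotientAddGroup.eq (s := latIn B (intVecs ι))).trans ?_
  rw [mem_latIn_intVecs_iff, AddSubgroup.coe_add, AddSubgroup.coe_neg, neg_add_eq_sub]

lemma dmk_eq_zero {x : ι → ℚ} (hx : x ∈ dualOf B (intVecs ι)) (hxi : x ∈ intVecs ι) :
    dmk B (intVecs ι) hx = 0 :=
  (QuotientAddGroup.eq_zero_iff _).2 (mem_latIn_intVecs_iff.2 hxi)

lemma dmk_add {x y : ι → ℚ} (hx : x ∈ dualOf B (intVecs ι)) (hy : y ∈ dualOf B (intVecs ι)) :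
    dmk B (intVecs ι) (add_mem hx hy) = dmk B (intVecs ι) hx + dmk B (intVecs ι) hy := rfl

lemma dmk_sub {x y : ι → ℚ} (hx : x ∈ dualOf B (intVecs ι)) (hy : y ∈ dualOf B (intVecs ι)) :
    dmk B (intVecs ι) (sub_mem hx hy) = dmk B (intVecs ι) hx - dmk B (intVecs ι) hy := rfl

lemma exists_dmk_eq (d : disc B (intVecs ι)) :
    ∃ (y : ι → ℚ) (hy : y ∈ dualOf B (intVecs ι)), dmk B (intVecs ι) hy = d := by
  obtain ⟨w, rfl⟩ := QuotientAddGroup.mk_surjective d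
  exact ⟨w.1, w.2, rfl⟩

end Discriminant

section Characteristic

variable {ι : Type} [Fintype ι] [DecidableEq ι] {B : Matrix ι ι ℤ}

lemma sum_sum_eq_sum_diag_of_charTwo {R : Type*} [CommRing R] [CharP R 2] (f : ι → ι → R)
    (hf : ∀ i j, f i j = f j i) : ∑ i, ∑ j, f i j = ∑ i, f i i := by
  rw [← Finset.sum_product', ← Finset.diag_union_offDiag,
    Finset.sum_union (Finset.disjoint_diag_offDiag _), Finset.sum_diag, add_eq_left]
  refine Finset.sum_involution (fun p _ => p.swap) (fun p _ => ?_) (fun p hp _ => ?_)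
    (fun p hp => by simpa [eq_comm] using hp) (fun p _ => rfl)
  · rw [Prod.fst_swap, Prod.snd_swap, hf p.2 p.1, CharTwo.add_self_eq_zero]
  · exact fun h => (Finset.mem_offDiag.1 hp).2.2 (congrArg Prod.fst h).symm

lemma two_dvd_sum_diag_sub (hB : B.IsSymm) (m : ι → ℤ) :
    (2 : ℤ) ∣ ∑ i, B i i * m i - ∑ i, ∑ j, m i * B i j * m j := by
  refine (ZMod.intCast_zmod_eq_zero_iff_dvd _ 2).1 ?_
  push_cast
  rw [sub_eq_zero, sum_sum_eq_sum_diag_of_charTwo _ fun i j => by rw [hB.apply i j]; ring]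
  refine Finset.sum_congr rfl fun i _ => ?_
  generalize (m i : ZMod 2) = a
  generalize (B i i : ZMod 2) = b
  revert a b
  decide

noncomputable def diagChar (B : Matrix ι ι ℤ) : ι → ℚ :=
  (B.map (Int.cast : ℤ → ℚ))⁻¹ *ᵥ fun i => (B i i : ℚ)

lemma diagChar_mem_charOf (hB : B.IsSymm) (hd : B.det ≠ 0) :
    diagChar B ∈ CharOf B (intVecs ι) := by
  refine ⟨inv_mulVec_mem_dualOf hB hd fun i => isInt_intCast _, fun y hy => ?_⟩
  obtain ⟨m, rfl⟩ := exists_intCast_eq hy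
  obtain ⟨k, hk⟩ := two_dvd_sum_diag_sub hB m
  refine ⟨k, ?_⟩
  rw [diagChar, qform_inv_mulVec hB hd, qform_intCast, dotProduct]
  exact_mod_cast hk

lemma add_two_smul_mem_charOf {χ x : ι → ℚ} (hχ : χ ∈ CharOf B (intVecs ι))
    (hx : x ∈ dualOf B (intVecs ι)) : χ + (2 : ℚ) • x ∈ CharOf B (intVecs ι) := by
  refine ⟨add_mem hχ.1 (by rw [two_smul]; exact add_mem hx hx), fun y hy => ?_⟩
  obtain ⟨m, hm⟩ := hχ.2 y hy
  obtain ⟨a, ha⟩ := hx.2 y hy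
  refine ⟨m + a, ?_⟩
  rw [qform_add_left, qform_smul_left]
  push_cast
  linarith

lemma exists_eq_add_two_smul_of_mem_charOf {χ χ' : ι → ℚ} (hχ : χ ∈ CharOf B (intVecs ι))
    (hχ' : χ' ∈ CharOf B (intVecs ι)) : ∃ x ∈ dualOf B (intVecs ι), χ' = χ + (2 : ℚ) • x := by
  refine ⟨(2 : ℚ)⁻¹ • (χ' - χ), mem_dualOf_intVecs_iff.2 fun y hy => ?_, by module⟩
  obtain ⟨m, hm⟩ := hχ.2 y hy
  obtain ⟨m', hm'⟩ := hχ'.2 y hy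
  rw [qform_smul_left, qform_sub_left]
  exact ⟨m' - m, by push_cast; linarith⟩

/-- The change `(|χ + 2x| - |χ|) / 4` of the norm under the action `χ ↦ χ + 2x`. -/
def charQuad (B : Matrix ι ι ℤ) (χ x : ι → ℚ) : ℚ := qform B χ x + qform B x x

lemma qform_add_two_smul_self (hB : B.IsSymm) (χ x : ι → ℚ) :
    qform B (χ + (2 : ℚ) • x) (χ + (2 : ℚ) • x) = qform B χ χ + 4 * charQuad B χ x := by
  rw [qform_add_add_self hB, qform_smul_left, qform_smul_right, qform_smul_right, charQuad]
  ring

lemma charQuad_add (hB : B.IsSymm) (χ x x' : ι → ℚ) :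
    charQuad B χ (x + x') = charQuad B χ x + charQuad B χ x' + 2 * qform B x x' := by
  rw [charQuad, charQuad, charQuad, qform_add_right, qform_add_add_self hB]
  ring

lemma isEvenInt_charQuad_add_sub (hB : B.IsSymm) {χ x t : ι → ℚ}
    (hχ : χ ∈ CharOf B (intVecs ι)) (hx : x ∈ dualOf B (intVecs ι)) (ht : t ∈ intVecs ι) :
    isEvenInt (charQuad B χ (x + t) - charQuad B χ x) := by
  have hχt : isEvenInt (qform B χ t - qform B t t) := hχ.2 t ht
  have htt := isEvenInt_two_mul ((mem_dualOf_of_mem_intVecs (B := B) ht).2 t ht)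
  have hxt := isEvenInt_two_mul (hx.2 t ht)
  convert isEvenInt_add (isEvenInt_add hχt htt) hxt using 1
  rw [charQuad_add hB]
  unfold charQuad
  ring

end Characteristic

section Signature

lemma exists_equiv_fin_add_iff_lt {κ : Type*} [Fintype κ] (P : κ → Prop) [DecidablePred P] :
    ∃ (p q : ℕ) (σ : Fin (p + q) ≃ κ), ∀ i, P (σ i) ↔ (i : ℕ) < p := by
  refine ⟨_, _, finSumFinEquiv.symm.trans (((Fintype.equivFin {k // P k}).symm.sumCongr
    (Fintype.equivFin {k // ¬ P k}).symm).trans (Equiv.sumCompl P)), fun i => ?_⟩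
  induction i using Fin.addCases with
  | left a => simpa using ((Fintype.equivFin {k // P k}).symm a).2
  | right b => simpa using ((Fintype.equivFin {k // ¬ P k}).symm b).2

variable {ι : Type} [Fintype ι] [DecidableEq ι] {B : Matrix ι ι ℤ}

lemma exists_signature (hB : B.IsSymm) (hd : B.det ≠ 0) : ∃ s, IsSignatureOf B (intVecs ι) s := by
  have hsymm : LinearMap.BilinForm.IsSymm (B.map (Int.cast : ℤ → ℚ)).toBilin' :=
    Matrix.isSymm_toBilin'_iff_isSymm.2 (hB.map _)
  obtain ⟨v, hv⟩ :=
    LinearMap.BilinForm.exists_orthogonal_basis (LinearMap.BilinForm.isSymm_iff.1 hsymm)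
  have hnz (i) : qform B (v i) (v i) ≠ 0 := by
    rw [qform_eq_toBilin']
    exact hv.not_isOrtho_basis_self_of_separatingLeft
      (LinearMap.BilinForm.nondegenerate_toBilin'_of_det_ne_zero' _
        (isUnit_det_map_intCast hd).ne_zero).1 i
  obtain ⟨p, q, σ, hσ⟩ := exists_equiv_fin_add_iff_lt fun i => 0 < qform B (v i) (v i)
  refine ⟨p - q, p, q, v ∘ σ, fun _ => by simp [span_intVecs], ?_,
    v.linearIndependent.comp σ σ.injective, fun i j hij => ?_, fun i => ?_, rfl⟩
  · rw [Set.range_comp, σ.range_eq_univ, Set.image_univ, v.span_eq, span_intVecs]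
  · rw [Function.comp_apply, Function.comp_apply, qform_eq_toBilin']
    exact hv (σ.injective.ne hij)
  · split_ifs with h
    · exact (hσ i).2 h
    · exact lt_of_le_of_ne (not_lt.1 (mt (hσ i).1 h)) (hnz _)

end Signature

section Gluing

variable {ι κ : Type} [Fintype ι] [DecidableEq ι] [Fintype κ] [DecidableEq κ]
  {B₁ : Matrix ι ι ℤ} {B₂ : Matrix κ κ ℤ} {Φ : (ι → ℚ) → (κ → ℚ)}
  {ψ : disc B₁ (intVecs ι) ≃+ disc B₂ (intVecs κ)}

lemma isEvenInt_charQuad_add_charQuad (hB₁ : B₁.IsSymm) (hd₁ : B₁.det ≠ 0)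
    (hB₂ : B₂.IsSymm) (hd₂ : B₂.det ≠ 0) (hiso : TorsorMapIso B₁ (intVecs ι) B₂ (intVecs κ) Φ ψ)
    (hrho : RhoCompat B₁ (intVecs ι) B₂ (intVecs κ) (-1) Φ) {χ x : ι → ℚ} {y : κ → ℚ}
    (hχ : χ ∈ CharOf B₁ (intVecs ι)) (hx : x ∈ dualOf B₁ (intVecs ι))
    (hy : y ∈ dualOf B₂ (intVecs κ)) (hxy : ψ (dmk _ _ hx) = dmk _ _ hy) :
    isEvenInt (charQuad B₁ χ x + charQuad B₂ (Φ χ) y) := by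
  obtain ⟨s₁, hs₁⟩ := exists_signature hB₁ hd₁
  obtain ⟨s₂, hs₂⟩ := exists_signature hB₂ hd₂
  have hχ' := add_two_smul_mem_charOf hχ hx
  obtain ⟨y₀, hy₀, hΦ⟩ := exists_eq_add_two_smul_of_mem_charOf (hiso.1 χ hχ) (hiso.1 _ hχ')
  have hyy₀ : y - y₀ ∈ intVecs κ :=
    (dmk_eq_dmk_iff hy₀ hy).1 ((hiso.2.2.2 χ hχ _ hχ' x y₀ hx hy₀ rfl hΦ).symm.trans hxy)
  -- the difference of the `ρ`-relations at `χ + 2x` and at `χ`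
  have hy₀_even : isEvenInt (charQuad B₁ χ x + charQuad B₂ (Φ χ) y₀) := by
    obtain ⟨m, hm⟩ := hrho χ hχ s₁ s₂ hs₁ hs₂
    obtain ⟨m', hm'⟩ := hrho _ hχ' s₁ s₂ hs₁ hs₂
    rw [hΦ, qform_add_two_smul_self hB₁, qform_add_two_smul_self hB₂] at hm'
    exact ⟨m' - m, by push_cast; linarith⟩
  have hshift := isEvenInt_charQuad_add_sub hB₂ (hiso.1 χ hχ) hy₀ hyy₀
  rw [add_sub_cancel] at hshift
  convert isEvenInt_add hy₀_even hshift using 1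
  ring

lemma isInt_qform_add_qform_of_graph (hB₁ : B₁.IsSymm) (hd₁ : B₁.det ≠ 0)
    (hB₂ : B₂.IsSymm) (hd₂ : B₂.det ≠ 0) (hiso : TorsorMapIso B₁ (intVecs ι) B₂ (intVecs κ) Φ ψ)
    (hrho : RhoCompat B₁ (intVecs ι) B₂ (intVecs κ) (-1) Φ) {x x' : ι → ℚ} {y y' : κ → ℚ}
    (hx : x ∈ dualOf B₁ (intVecs ι)) (hy : y ∈ dualOf B₂ (intVecs κ))
    (hxy : ψ (dmk _ _ hx) = dmk _ _ hy) (hx' : x' ∈ dualOf B₁ (intVecs ι))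
    (hy' : y' ∈ dualOf B₂ (intVecs κ)) (hxy' : ψ (dmk _ _ hx') = dmk _ _ hy') :
    isInt (qform B₁ x x' + qform B₂ y y') := by
  set χ := diagChar B₁
  have heven {x : ι → ℚ} {y : κ → ℚ} (hx : x ∈ dualOf B₁ (intVecs ι))
      (hy : y ∈ dualOf B₂ (intVecs κ)) (hxy : ψ (dmk _ _ hx) = dmk _ _ hy) :
      isEvenInt (charQuad B₁ χ x + charQuad B₂ (Φ χ) y) :=
    isEvenInt_charQuad_add_charQuad hB₁ hd₁ hB₂ hd₂ hiso hrho
      (diagChar_mem_charOf hB₁ hd₁) hx hy hxy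
  have hsum : ψ (dmk _ _ (add_mem hx hx')) = dmk _ _ (add_mem hy hy') := by
    rw [dmk_add hx hx', dmk_add hy hy', map_add, hxy, hxy']
  refine isInt_of_isEvenInt_two_mul ?_
  convert isEvenInt_sub (isEvenInt_sub (heven _ _ hsum) (heven _ _ hxy)) (heven _ _ hxy') using 1
  rw [charQuad_add hB₁, charQuad_add hB₂]
  ring

end Gluing

section GlueLattice

variable (L₁ L₂ : IntLattice)

lemma qform_glueGram (w w' : Fin L₁.n ⊕ Fin L₂.n → ℚ) :
    qform (glueGram L₁ L₂) w w' =
      qform L₁.B (w ∘ Sum.inl) (w' ∘ Sum.inl) + qform L₂.B (w ∘ Sum.inr) (w' ∘ Sum.inr) := by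
  simp [qform, glueGram, dotProduct, mulVec, fromBlocks, Fintype.sum_sum_type]

variable {L₁ L₂} in
lemma qform_glueGram_of_mem_inlLat (z : Fin L₁.n ⊕ Fin L₂.n → ℚ) {u : Fin L₁.n ⊕ Fin L₂.n → ℚ}
    (hu : u ∈ inlLat L₁ L₂) :
    qform (glueGram L₁ L₂) z u = qform L₁.B (z ∘ Sum.inl) (u ∘ Sum.inl) := by
  rw [qform_glueGram, hu.2, qform_zero_right, add_zero]

variable {L₁ L₂} in
lemma qform_glueGram_of_mem_inrLat (z : Fin L₁.n ⊕ Fin L₂.n → ℚ) {u : Fin L₁.n ⊕ Fin L₂.n → ℚ}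
    (hu : u ∈ inrLat L₁ L₂) :
    qform (glueGram L₁ L₂) z u = qform L₂.B (z ∘ Sum.inr) (u ∘ Sum.inr) := by
  rw [qform_glueGram, hu.2, qform_zero_right, zero_add]

variable {L₁ L₂} in
lemma comp_inl_mem_dualOf {z : Fin L₁.n ⊕ Fin L₂.n → ℚ}
    (hz : ∀ u ∈ inlLat L₁ L₂, isInt (qform (glueGram L₁ L₂) z u)) :
    z ∘ Sum.inl ∈ dualOf L₁.B (intVecs (Fin L₁.n)) :=
  mem_dualOf_intVecs_iff.2 fun x hx => by
    have hu : Sum.elim x 0 ∈ inlLat L₁ L₂ := ⟨hx, rfl⟩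
    simpa [qform_glueGram_of_mem_inlLat z hu] using hz _ hu

variable {L₁ L₂} in
lemma comp_inr_mem_dualOf {z : Fin L₁.n ⊕ Fin L₂.n → ℚ}
    (hz : ∀ u ∈ inrLat L₁ L₂, isInt (qform (glueGram L₁ L₂) z u)) :
    z ∘ Sum.inr ∈ dualOf L₂.B (intVecs (Fin L₂.n)) :=
  mem_dualOf_intVecs_iff.2 fun y hy => by
    have hu : Sum.elim (0 : Fin L₁.n → ℚ) y ∈ inrLat L₁ L₂ := ⟨hy, rfl⟩
    simpa [qform_glueGram_of_mem_inrLat z hu] using hz _ hu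

lemma inlLat_subset_intVecs : inlLat L₁ L₂ ⊆ intVecs _ := by
  rintro w ⟨h₁, h₂⟩ (i | j)
  · exact h₁ i
  · rw [show w (Sum.inr j) = 0 from congrFun h₂ j]
    exact isInt_zero

lemma inrLat_subset_intVecs : inrLat L₁ L₂ ⊆ intVecs _ := by
  rintro w ⟨h₂, h₁⟩ (i | j)
  · rw [show w (Sum.inl i) = 0 from congrFun h₁ i]
    exact isInt_zero
  · exact h₂ j

lemma orthogonalSets_inlLat_inrLat :
    OrthogonalSets (glueGram L₁ L₂) (inlLat L₁ L₂) (inrLat L₁ L₂) := by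
  rintro w ⟨-, hw⟩ u ⟨-, hu⟩
  rw [qform_glueGram, hw, hu, qform_zero_right, qform_zero_left, add_zero]

lemma rkOf_inlLat : rkOf (inlLat L₁ L₂) = L₁.n := by
  let f := (LinearEquiv.sumArrowLequivProdArrow (Fin L₁.n) (Fin L₂.n) ℚ ℚ).symm.toLinearMap ∘ₗ
    LinearMap.inl ℚ _ _
  have hf : Function.Injective f := by
    rw [LinearMap.coe_comp]
    exact (LinearEquiv.injective _).comp LinearMap.inl_injective
  have himage : inlLat L₁ L₂ = f '' intVecs (Fin L₁.n) := by
    ext w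
    constructor
    · rintro ⟨h₁, h₂⟩
      exact ⟨w ∘ Sum.inl, h₁, by ext (i | j) <;> simp [f, ← h₂]⟩
    · rintro ⟨x, hx, rfl⟩
      exact ⟨by simpa [f, Function.comp_def] using hx, by ext; simp [f]⟩
  rw [himage, rkOf_image hf, rkOf_intVecs, Fintype.card_fin]

lemma rkOf_inrLat : rkOf (inrLat L₁ L₂) = L₂.n := by
  let f := (LinearEquiv.sumArrowLequivProdArrow (Fin L₁.n) (Fin L₂.n) ℚ ℚ).symm.toLinearMap ∘ₗ
    LinearMap.inr ℚ _ _
  have hf : Function.Injective f := by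
    rw [LinearMap.coe_comp]
    exact (LinearEquiv.injective _).comp LinearMap.inr_injective
  have himage : inrLat L₁ L₂ = f '' intVecs (Fin L₂.n) := by
    ext w
    constructor
    · rintro ⟨h₂, h₁⟩
      exact ⟨w ∘ Sum.inr, h₂, by ext (i | j) <;> simp [f, ← h₁]⟩
    · rintro ⟨y, hy, rfl⟩
      exact ⟨by simpa [f, Function.comp_def] using hy, by ext; simp [f]⟩
  rw [himage, rkOf_image hf, rkOf_intVecs, Fintype.card_fin]

variable (ψ : disc L₁.B (intVecs (Fin L₁.n)) ≃+ disc L₂.B (intVecs (Fin L₂.n)))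

lemma intVecs_subset_glueSet : intVecs _ ⊆ glueSet L₁ L₂ ψ := fun w hw =>
  have h₁ : w ∘ Sum.inl ∈ intVecs _ := fun i => hw (Sum.inl i)
  have h₂ : w ∘ Sum.inr ∈ intVecs _ := fun j => hw (Sum.inr j)
  ⟨mem_dualOf_of_mem_intVecs h₁, mem_dualOf_of_mem_intVecs h₂,
    by rw [dmk_eq_zero _ h₁, dmk_eq_zero _ h₂, map_zero]⟩

lemma inlLat_subset_glueSet : inlLat L₁ L₂ ⊆ glueSet L₁ L₂ ψ :=
  (inlLat_subset_intVecs L₁ L₂).trans (intVecs_subset_glueSet L₁ L₂ ψ)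

lemma inrLat_subset_glueSet : inrLat L₁ L₂ ⊆ glueSet L₁ L₂ ψ :=
  (inrLat_subset_intVecs L₁ L₂).trans (intVecs_subset_glueSet L₁ L₂ ψ)

lemma span_glueSet : Submodule.span ℚ (glueSet L₁ L₂ ψ) = ⊤ :=
  top_unique (span_intVecs.symm.le.trans (Submodule.span_mono (intVecs_subset_glueSet L₁ L₂ ψ)))

lemma rkOf_glueSet : rkOf (glueSet L₁ L₂ ψ) = L₁.n + L₂.n := by
  rw [rkOf, span_glueSet, finrank_top, Module.finrank_fintype_fun_eq_card, Fintype.card_sum,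
    Fintype.card_fin, Fintype.card_fin]

lemma complementaryIn_inlLat_inrLat :
    ComplementaryIn (glueGram L₁ L₂) (glueSet L₁ L₂ ψ) (inlLat L₁ L₂) (inrLat L₁ L₂) :=
  ⟨orthogonalSets_inlLat_inrLat L₁ L₂, by rw [rkOf_inlLat, rkOf_inrLat, rkOf_glueSet]⟩

lemma isLat_glueSet : IsLat (glueSet L₁ L₂ ψ) := by
  refine ⟨intVecs_subset_glueSet L₁ L₂ ψ intVecs_zero, ?_⟩
  rintro w ⟨hw₁, hw₂, hw⟩ u ⟨hu₁, hu₂, hu⟩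
  refine ⟨sub_mem hw₁ hu₁, sub_mem hw₂ hu₂, ?_⟩
  rw [dmk_sub hw₁ hu₁, dmk_sub hw₂ hu₂, map_sub, hw, hu]

variable {L₁ L₂ ψ}

lemma integralOn_glueSet {Φ : (Fin L₁.n → ℚ) → (Fin L₂.n → ℚ)}
    (hiso : TorsorMapIso L₁.B (intVecs (Fin L₁.n)) L₂.B (intVecs (Fin L₂.n)) Φ ψ)
    (hrho : RhoCompat L₁.B (intVecs (Fin L₁.n)) L₂.B (intVecs (Fin L₂.n)) (-1) Φ) :
    IntegralOn (glueGram L₁ L₂) (glueSet L₁ L₂ ψ) := by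
  rintro w ⟨hw₁, hw₂, hw⟩ u ⟨hu₁, hu₂, hu⟩
  rw [qform_glueGram]
  exact isInt_qform_add_qform_of_graph L₁.symm L₁.nondeg L₂.symm L₂.nondeg hiso hrho
    hw₁ hw₂ hw hu₁ hu₂ hu

lemma glueSet_subset_dualOf (hint : IntegralOn (glueGram L₁ L₂) (glueSet L₁ L₂ ψ)) :
    glueSet L₁ L₂ ψ ⊆ dualOf (glueGram L₁ L₂) (glueSet L₁ L₂ ψ) := fun w hw =>
  ⟨by simp [span_glueSet], fun u hu => hint w hw u hu⟩

lemma exists_sumElim_mem_glueSet_left {x : Fin L₁.n → ℚ}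
    (hx : x ∈ dualOf L₁.B (intVecs (Fin L₁.n))) : ∃ y, Sum.elim x y ∈ glueSet L₁ L₂ ψ := by
  obtain ⟨y, hy, hψ⟩ := exists_dmk_eq (ψ (dmk _ _ hx))
  exact ⟨y, hx, hy, hψ.symm⟩

lemma exists_sumElim_mem_glueSet_right {y : Fin L₂.n → ℚ}
    (hy : y ∈ dualOf L₂.B (intVecs (Fin L₂.n))) : ∃ x, Sum.elim x y ∈ glueSet L₁ L₂ ψ := by
  obtain ⟨x, hx, hψ⟩ := exists_dmk_eq (ψ.symm (dmk _ _ hy))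
  exact ⟨x, hx, hy, (congrArg ψ hψ).trans (ψ.apply_symm_apply _)⟩

lemma primitiveIn_inlLat (hint : IntegralOn (glueGram L₁ L₂) (glueSet L₁ L₂ ψ)) :
    PrimitiveIn (glueGram L₁ L₂) (glueSet L₁ L₂ ψ) (inlLat L₁ L₂) := by
  intro x hx
  obtain ⟨y, hy⟩ := exists_sumElim_mem_glueSet_left (ψ := ψ) (comp_inl_mem_dualOf hx.2)
  refine ⟨_, glueSet_subset_dualOf hint hy, fun u hu => ?_⟩
  rw [qform_glueGram_of_mem_inlLat _ hu, qform_glueGram_of_mem_inlLat _ hu]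
  rfl

lemma primitiveIn_inrLat (hint : IntegralOn (glueGram L₁ L₂) (glueSet L₁ L₂ ψ)) :
    PrimitiveIn (glueGram L₁ L₂) (glueSet L₁ L₂ ψ) (inrLat L₁ L₂) := by
  intro y hy
  obtain ⟨x, hx⟩ := exists_sumElim_mem_glueSet_right (ψ := ψ) (comp_inr_mem_dualOf hy.2)
  refine ⟨_, glueSet_subset_dualOf hint hx, fun u hu => ?_⟩
  rw [qform_glueGram_of_mem_inrLat _ hu, qform_glueGram_of_mem_inrLat _ hu]
  rfl

lemma unimodularOn_glueSet (hint : IntegralOn (glueGram L₁ L₂) (glueSet L₁ L₂ ψ)) :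
    UnimodularOn (glueGram L₁ L₂) (glueSet L₁ L₂ ψ) := by
  refine Set.Subset.antisymm (fun z hz => ?_) (glueSet_subset_dualOf hint)
  have hz₁ := comp_inl_mem_dualOf fun u hu => hz.2 u (inlLat_subset_glueSet L₁ L₂ ψ hu)
  have hz₂ := comp_inr_mem_dualOf fun u hu => hz.2 u (inrLat_subset_glueSet L₁ L₂ ψ hu)
  obtain ⟨y, hy₁, hy₂, hψ⟩ := exists_sumElim_mem_glueSet_left (ψ := ψ) hz₁
  -- every `u ∈ Λ₂*` occurs in the glue lattice, so `z₂ - y` pairs integrally with all of `Λ₂*`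
  have hint₂ : z ∘ Sum.inr - y ∈ intVecs _ := by
    refine mem_intVecs_of_forall_dualOf L₂.symm L₂.nondeg fun u hu => ?_
    obtain ⟨x, hx⟩ := exists_sumElim_mem_glueSet_right (ψ := ψ) hu
    have := isInt_sub (hz.2 _ hx) ((glueSet_subset_dualOf hint ⟨hy₁, hy₂, hψ⟩).2 _ hx)
    rw [qform_glueGram, qform_glueGram] at this
    simpa [qform_sub_left] using this
  exact ⟨hz₁, hz₂, hψ.trans ((dmk_eq_dmk_iff hy₂ hz₂).2 hint₂)⟩

end GlueLattice

/-- Gluing two integral lattices along an isomorphism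
`(C(Λ₁), ρ₁) → (C(Λ₂), −ρ₂)` of ρ-invariants yields an integral unimodular lattice
containing them as complementary primitive sublattices. -/
theorem stmt_7 (L₁ L₂ : IntLattice)
    (Φ : (Fin L₁.n → ℚ) → (Fin L₂.n → ℚ))
    (ψ : disc L₁.B (intVecs (Fin L₁.n)) ≃+ disc L₂.B (intVecs (Fin L₂.n)))
    (hiso : TorsorMapIso L₁.B (intVecs (Fin L₁.n)) L₂.B (intVecs (Fin L₂.n)) Φ ψ)
    (hrho : RhoCompat L₁.B (intVecs (Fin L₁.n)) L₂.B (intVecs (Fin L₂.n)) (-1) Φ) :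
    IsLat (glueSet L₁ L₂ ψ) ∧
    IntegralOn (glueGram L₁ L₂) (glueSet L₁ L₂ ψ) ∧
    UnimodularOn (glueGram L₁ L₂) (glueSet L₁ L₂ ψ) ∧
    inlLat L₁ L₂ ⊆ glueSet L₁ L₂ ψ ∧ inrLat L₁ L₂ ⊆ glueSet L₁ L₂ ψ ∧
    ComplementaryIn (glueGram L₁ L₂) (glueSet L₁ L₂ ψ) (inlLat L₁ L₂) (inrLat L₁ L₂) ∧
    PrimitiveIn (glueGram L₁ L₂) (glueSet L₁ L₂ ψ) (inlLat L₁ L₂) ∧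
    PrimitiveIn (glueGram L₁ L₂) (glueSet L₁ L₂ ψ) (inrLat L₁ L₂) := by
  have hint := integralOn_glueSet hiso hrho
  exact ⟨isLat_glueSet L₁ L₂ ψ, hint, unimodularOn_glueSet hint,
    inlLat_subset_glueSet L₁ L₂ ψ, inrLat_subset_glueSet L₁ L₂ ψ,
    complementaryIn_inlLat_inrLat L₁ L₂ ψ, primitiveIn_inlLat hint, primitiveIn_inrLat hint⟩

end Greene
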